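/- Given two joint policies π_old, π_new in a γ-discounted MDP with Σ_i |A_i^{π_old}(s,a)| ≤ ε for all (s,a), and defining L_{π_old}(π_new) = η(π_old) + E_{s∼d^{π_old}, a∼π_new(·|s)}[Σ_i A_i^{π_old}(s,a)], the approximation error satisfies |η(π_new) − L_{π_old}(π_new)| ≤ (4εγ α²)/(1−γ)², where α = max_s D_TV(π_old(·|s), π_new(·|s)). -/

import Mathlib

open scoped BigOperators

/-- Distribution over states at time `t` of the Markov chain induced by joint policy `π`,
transition kernel `P`, and initial state distribution `d0`. -/
noncomputable def stateDist {S A : Type*} [Fintype S] [Fintype A]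
    (P : S → A → S → ℝ) (π : S → A → ℝ) (d0 : S → ℝ) : ℕ → S → ℝ
  | 0 => d0
  | t + 1 => fun s' => ∑ s, ∑ a, stateDist P π d0 t s * π s a * P s a s'

/-- Expected reward received at time `t` along trajectories of the induced chain. -/
noncomputable def expRew {S A : Type*} [Fintype S] [Fintype A]
    (P : S → A → S → ℝ) (π : S → A → ℝ) (r : S → A → ℝ) (d0 : S → ℝ) (t : ℕ) : ℝ :=
  ∑ s, stateDist P π d0 t s * ∑ a, π s a * r s a

/-- State-value function: expected discounted return starting from state `s`. -/
noncomputable def Vval {S A : Type*} [Fintype S] [Fintype A] [DecidableEq S]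
    (γ : ℝ) (P : S → A → S → ℝ) (π : S → A → ℝ) (r : S → A → ℝ) (s : S) : ℝ :=
  ∑' t : ℕ, γ ^ t * expRew P π r (fun s' => if s' = s then 1 else 0) t

/-- Action-value function: expected discounted return with `s₀ = s`, `a₀ = a` fixed,
and subsequent actions chosen by `π`. -/
noncomputable def Qval {S A : Type*} [Fintype S] [Fintype A]
    (γ : ℝ) (P : S → A → S → ℝ) (π : S → A → ℝ) (r : S → A → ℝ) (s : S) (a : A) : ℝ :=
  r s a + γ * ∑' t : ℕ, γ ^ t * expRew P π r (P s a) t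

/-- Individual advantage function. -/
noncomputable def Aval {S A : Type*} [Fintype S] [Fintype A] [DecidableEq S]
    (γ : ℝ) (P : S → A → S → ℝ) (π : S → A → ℝ) (r : S → A → ℝ) (s : S) (a : A) : ℝ :=
  Qval γ P π r s a - Vval γ P π r s

/-- Collective return: sum over agents of the expected individual discounted return. -/
noncomputable def eta {S A ι : Type*} [Fintype S] [Fintype A] [Fintype ι] [DecidableEq S]
    (γ : ℝ) (P : S → A → S → ℝ) (π : S → A → ℝ) (r : ι → S → A → ℝ) (d0 : S → ℝ) : ℝ :=
  ∑ i, ∑ s, d0 s * Vval γ P π (r i) s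

/-- Discounted state visitation measure. -/
noncomputable def dvisit {S A : Type*} [Fintype S] [Fintype A]
    (γ : ℝ) (P : S → A → S → ℝ) (π : S → A → ℝ) (d0 : S → ℝ) (s : S) : ℝ :=
  ∑' t : ℕ, γ ^ t * stateDist P π d0 t s


/-!
By the performance-difference identity, `η(π_new) - η(π_old)` is the discounted sum over `t` of
`d_t^new ⬝ g`, where `d_t` is the state distribution at time `t` and
`g s = E_{a ∼ π_new(s)} ∑ᵢ Aᵢ(s, a)`; the surrogate `L` is the same sum with `d_t^old` in place of
`d_t^new`. Since `π_old` averages each `Aᵢ` to zero, `|g| ≤ 2αε`, and coupling the two chains step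
by step gives `‖d_t^new - d_t^old‖₁ ≤ 2αt`. Hence the error is at most
`∑ₜ γ^t · t · 4α²ε = 4α²εγ / (1 - γ)²`.
-/

open Finset Matrix

section Simplex

variable {ι m n : Type*} [Fintype ι] [Fintype m] [Fintype n]

lemma sum_abs_eq_one_of_mem_stdSimplex {d : ι → ℝ} (hd : d ∈ stdSimplex ℝ ι) :
    ∑ i, |d i| = 1 := by
  simpa only [abs_of_nonneg (hd.1 _)] using hd.2

lemma abs_dotProduct_le (x : ι → ℝ) {w : ι → ℝ} {C : ℝ} (hw : ∀ i, |w i| ≤ C) :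
    |x ⬝ᵥ w| ≤ (∑ i, |x i|) * C :=
  calc |x ⬝ᵥ w| ≤ ∑ i, |x i| * |w i| := by
        simpa only [dotProduct, abs_mul] using abs_sum_le_sum_abs (fun i => x i * w i) univ
    _ ≤ ∑ i, |x i| * C := sum_le_sum fun i _ => mul_le_mul_of_nonneg_left (hw i) (abs_nonneg _)
    _ = (∑ i, |x i|) * C := (sum_mul ..).symm

lemma abs_dotProduct_le_of_mem_stdSimplex {d w : ι → ℝ} {C : ℝ} (hd : d ∈ stdSimplex ℝ ι)
    (hw : ∀ i, |w i| ≤ C) : |d ⬝ᵥ w| ≤ C := by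
  simpa only [sum_abs_eq_one_of_mem_stdSimplex hd, one_mul] using abs_dotProduct_le d hw

lemma abs_dotProduct_le_of_dotProduct_eq_zero {μ ν f : ι → ℝ} {ε : ℝ} (hμ : μ ⬝ᵥ f = 0)
    (hf : ∀ i, |f i| ≤ ε) : |ν ⬝ᵥ f| ≤ (∑ i, |ν i - μ i|) * ε := by
  simpa only [sub_dotProduct, hμ, sub_zero, Pi.sub_apply] using abs_dotProduct_le (ν - μ) hf

lemma vecMul_mem_stdSimplex {x : m → ℝ} {M : Matrix m n ℝ} (hx : x ∈ stdSimplex ℝ m)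
    (hM : ∀ i, M i ∈ stdSimplex ℝ n) : x ᵥ* M ∈ stdSimplex ℝ n := by
  refine ⟨fun j => sum_nonneg fun i _ => mul_nonneg (hx.1 i) ((hM i).1 j), ?_⟩
  simp only [vecMul, dotProduct]
  rw [sum_comm]
  simp only [← mul_sum, (hM _).2, mul_one, hx.2]

lemma sum_abs_vecMul_le (x : m → ℝ) {M : Matrix m n ℝ} {C : ℝ} (hM : ∀ i, ∑ j, |M i j| ≤ C) :
    ∑ j, |(x ᵥ* M) j| ≤ (∑ i, |x i|) * C :=
  calc ∑ j, |(x ᵥ* M) j| ≤ ∑ j, ∑ i, |x i| * |M i j| :=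
        sum_le_sum fun j _ => by
          simpa only [vecMul, dotProduct, abs_mul] using
            abs_sum_le_sum_abs (fun i => x i * M i j) univ
    _ = ∑ i, |x i| * ∑ j, |M i j| := by rw [sum_comm]; simp only [mul_sum]
    _ ≤ (∑ i, |x i|) * C := by
        rw [sum_mul]
        exact sum_le_sum fun i _ => mul_le_mul_of_nonneg_left (hM i) (abs_nonneg _)

end Simplex

section Discounted

variable {γ : ℝ} {f : ℕ → ℝ}

lemma summable_pow_mul_of_abs_le {C : ℝ} (hγ0 : 0 ≤ γ) (hγ1 : γ < 1) (hf : ∀ t, |f t| ≤ C) :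
    Summable fun t => γ ^ t * f t :=
  .of_norm_bounded ((summable_geometric_of_lt_one hγ0 hγ1).mul_right C) fun t => by
    rw [Real.norm_eq_abs, abs_mul, abs_pow, abs_of_nonneg hγ0]
    exact mul_le_mul_of_nonneg_left (hf t) (by positivity)

lemma abs_le_of_hasSum_pow_mul_of_abs_le_mul {C a : ℝ} (hγ0 : 0 ≤ γ) (hγ1 : γ < 1)
    (hf : HasSum (fun t => γ ^ t * f t) a) (hC : ∀ t : ℕ, |f t| ≤ C * t) :
    |a| ≤ C * γ / (1 - γ) ^ 2 := by
  have hg := (hasSum_coe_mul_geometric_of_norm_lt_one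
    (by rwa [Real.norm_of_nonneg hγ0])).mul_left C
  rw [← mul_div_assoc] at hg
  refine hf.norm_le_of_bounded hg fun t => ?_
  rw [Real.norm_eq_abs, abs_mul, abs_pow, abs_of_nonneg hγ0]
  calc γ ^ t * |f t| ≤ γ ^ t * (C * t) := mul_le_mul_of_nonneg_left (hC t) (by positivity)
    _ = C * (t * γ ^ t) := by ring

end Discounted

section MarkovChain

variable {S A : Type*} [Fintype S] [Fintype A]

def transitionMatrix (P : S → A → S → ℝ) (π : S → A → ℝ) : Matrix S S ℝ :=
  Matrix.of fun s s' => ∑ a, π s a * P s a s'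

def policyReward (π r : S → A → ℝ) (s : S) : ℝ :=
  ∑ a, π s a * r s a

variable {P : S → A → S → ℝ} {π μ ν : S → A → ℝ} {d0 : S → ℝ}

lemma stateDist_succ (P : S → A → S → ℝ) (π : S → A → ℝ) (d0 : S → ℝ) (t : ℕ) :
    stateDist P π d0 (t + 1) = stateDist P π d0 t ᵥ* transitionMatrix P π := by
  ext s'
  simp only [stateDist, vecMul, dotProduct, transitionMatrix, of_apply, mul_sum, mul_assoc]

lemma expRew_eq_dotProduct (P : S → A → S → ℝ) (π r : S → A → ℝ) (d0 : S → ℝ) (t : ℕ) :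
    expRew P π r d0 t = stateDist P π d0 t ⬝ᵥ policyReward π r :=
  rfl

lemma transitionMatrix_mulVec_apply (v : S → ℝ) (s : S) :
    (transitionMatrix P π *ᵥ v) s = ∑ a, π s a * (P s a ⬝ᵥ v) := by
  simp only [mulVec, dotProduct, transitionMatrix, of_apply, sum_mul, mul_sum, mul_assoc]
  exact sum_comm

lemma transitionMatrix_apply_mem_stdSimplex (hP : ∀ s a, P s a ∈ stdSimplex ℝ S)
    (hπ : ∀ s, π s ∈ stdSimplex ℝ A) (s : S) : transitionMatrix P π s ∈ stdSimplex ℝ S :=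
  vecMul_mem_stdSimplex (hπ s) (hP s)

lemma stateDist_mem_stdSimplex (hP : ∀ s a, P s a ∈ stdSimplex ℝ S)
    (hπ : ∀ s, π s ∈ stdSimplex ℝ A) (hd0 : d0 ∈ stdSimplex ℝ S) (t : ℕ) :
    stateDist P π d0 t ∈ stdSimplex ℝ S := by
  induction t with
  | zero => exact hd0
  | succ t ih =>
    rw [stateDist_succ]
    exact vecMul_mem_stdSimplex ih (transitionMatrix_apply_mem_stdSimplex hP hπ)

lemma abs_expRew_le (hP : ∀ s a, P s a ∈ stdSimplex ℝ S) (hπ : ∀ s, π s ∈ stdSimplex ℝ A)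
    (r : S → A → ℝ) (hd0 : d0 ∈ stdSimplex ℝ S) (t : ℕ) :
    |expRew P π r d0 t| ≤ ‖policyReward π r‖ :=
  abs_dotProduct_le_of_mem_stdSimplex (stateDist_mem_stdSimplex hP hπ hd0 t)
    fun s => norm_le_pi_norm (policyReward π r) s

lemma hasSum_dvisit_dotProduct {γ : ℝ} (hγ0 : 0 ≤ γ) (hγ1 : γ < 1)
    (hP : ∀ s a, P s a ∈ stdSimplex ℝ S) (hπ : ∀ s, π s ∈ stdSimplex ℝ A)
    (hd0 : d0 ∈ stdSimplex ℝ S) (g : S → ℝ) :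
    HasSum (fun t => γ ^ t * (stateDist P π d0 t ⬝ᵥ g)) (dvisit γ P π d0 ⬝ᵥ g) := by
  have h : ∀ s, HasSum (fun t => γ ^ t * stateDist P π d0 t s) (dvisit γ P π d0 s) := fun s =>
    (summable_pow_mul_of_abs_le hγ0 hγ1 fun t => by
      have hdt := stateDist_mem_stdSimplex hP hπ hd0 t
      rw [abs_of_nonneg (hdt.1 s)]
      exact (mem_Icc_of_mem_stdSimplex hdt s).2).hasSum
  simpa only [dotProduct, mul_sum, mul_assoc] using hasSum_sum fun s _ => (h s).mul_right (g s)

lemma sum_abs_transitionMatrix_sub_le (hP : ∀ s a, P s a ∈ stdSimplex ℝ S) (s : S) :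
    ∑ s', |transitionMatrix P ν s s' - transitionMatrix P μ s s'| ≤ ∑ a, |ν s a - μ s a| := by
  have h := sum_abs_vecMul_le (ν s - μ s) fun a => (sum_abs_eq_one_of_mem_stdSimplex (hP s a)).le
  simpa only [transitionMatrix, of_apply, vecMul, dotProduct, Pi.sub_apply, sub_mul,
    sum_sub_distrib, mul_one] using h

lemma sum_abs_stateDist_sub_le (hP : ∀ s a, P s a ∈ stdSimplex ℝ S)
    (hμ : ∀ s, μ s ∈ stdSimplex ℝ A) (hν : ∀ s, ν s ∈ stdSimplex ℝ A)
    (hd0 : d0 ∈ stdSimplex ℝ S) {β : ℝ} (hβ : ∀ s, ∑ a, |ν s a - μ s a| ≤ β) (t : ℕ) :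
    ∑ s, |stateDist P ν d0 t s - stateDist P μ d0 t s| ≤ t * β := by
  induction t with
  | zero => simp [stateDist]
  | succ t ih =>
    have hsplit : stateDist P ν d0 (t + 1) - stateDist P μ d0 (t + 1) =
        (stateDist P ν d0 t - stateDist P μ d0 t) ᵥ* transitionMatrix P ν +
          stateDist P μ d0 t ᵥ* (transitionMatrix P ν - transitionMatrix P μ) := by
      rw [stateDist_succ, stateDist_succ, sub_vecMul, vecMul_sub]
      abel
    calc ∑ s, |(stateDist P ν d0 (t + 1) - stateDist P μ d0 (t + 1)) s|
        ≤ ∑ s, |((stateDist P ν d0 t - stateDist P μ d0 t) ᵥ* transitionMatrix P ν) s| +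
            ∑ s, |(stateDist P μ d0 t ᵥ* (transitionMatrix P ν - transitionMatrix P μ)) s| := by
          rw [hsplit, ← sum_add_distrib]
          exact sum_le_sum fun s _ => abs_add_le _ _
      _ ≤ (∑ s, |stateDist P ν d0 t s - stateDist P μ d0 t s|) * 1 +
            (∑ s, |stateDist P μ d0 t s|) * β :=
          add_le_add
            (sum_abs_vecMul_le _ fun s =>
              (sum_abs_eq_one_of_mem_stdSimplex (transitionMatrix_apply_mem_stdSimplex hP hν s)).le)
            (sum_abs_vecMul_le _ fun s => (sum_abs_transitionMatrix_sub_le hP s).trans (hβ s))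
      _ ≤ (t + 1 : ℕ) * β := by
          rw [sum_abs_eq_one_of_mem_stdSimplex (stateDist_mem_stdSimplex hP hμ hd0 t)]
          push_cast
          linarith

lemma abs_stateDist_dotProduct_sub_le (hP : ∀ s a, P s a ∈ stdSimplex ℝ S)
    (hμ : ∀ s, μ s ∈ stdSimplex ℝ A) (hν : ∀ s, ν s ∈ stdSimplex ℝ A)
    (hd0 : d0 ∈ stdSimplex ℝ S) {β C : ℝ} (hβ : ∀ s, ∑ a, |ν s a - μ s a| ≤ β) {g : S → ℝ}
    (hg : ∀ s, |g s| ≤ C) (hC : 0 ≤ C) (t : ℕ) :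
    |stateDist P ν d0 t ⬝ᵥ g - stateDist P μ d0 t ⬝ᵥ g| ≤ t * β * C := by
  rw [← sub_dotProduct]
  exact (abs_dotProduct_le _ hg).trans
    (mul_le_mul_of_nonneg_right (sum_abs_stateDist_sub_le hP hμ hν hd0 hβ t) hC)

end MarkovChain

section Values

variable {S A : Type*} [Fintype S] [Fintype A] [DecidableEq S]
variable {γ : ℝ} {P : S → A → S → ℝ} {π μ ν : S → A → ℝ}

lemma stateDist_eq_vecMul_pow (P : S → A → S → ℝ) (π : S → A → ℝ) (d0 : S → ℝ) (t : ℕ) :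
    stateDist P π d0 t = d0 ᵥ* transitionMatrix P π ^ t := by
  induction t with
  | zero => exact (vecMul_one d0).symm
  | succ t ih => rw [stateDist_succ, ih, vecMul_vecMul, pow_succ]

lemma expRew_eq_dotProduct_mulVec (P : S → A → S → ℝ) (π r : S → A → ℝ) (d0 : S → ℝ) (t : ℕ) :
    expRew P π r d0 t = d0 ⬝ᵥ (transitionMatrix P π ^ t *ᵥ policyReward π r) := by
  rw [expRew_eq_dotProduct, stateDist_eq_vecMul_pow, dotProduct_mulVec]

lemma hasSum_Vval (hγ0 : 0 ≤ γ) (hγ1 : γ < 1) (hP : ∀ s a, P s a ∈ stdSimplex ℝ S)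
    (hπ : ∀ s, π s ∈ stdSimplex ℝ A) (r : S → A → ℝ) (s : S) :
    HasSum (fun t => γ ^ t * (transitionMatrix P π ^ t *ᵥ policyReward π r) s)
      (Vval γ P π r s) := by
  have hδ : (fun s' => if s' = s then (1 : ℝ) else 0) ∈ stdSimplex ℝ S := by
    simpa only [eq_comm] using ite_eq_mem_stdSimplex ℝ s
  have hrow : ∀ t, expRew P π r (fun s' => if s' = s then 1 else 0) t =
      (transitionMatrix P π ^ t *ᵥ policyReward π r) s := fun t => by
    simp [expRew_eq_dotProduct_mulVec, dotProduct]
  simp only [← hrow]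
  exact (summable_pow_mul_of_abs_le hγ0 hγ1 (abs_expRew_le hP hπ r hδ)).hasSum

lemma hasSum_expRew (hγ0 : 0 ≤ γ) (hγ1 : γ < 1) (hP : ∀ s a, P s a ∈ stdSimplex ℝ S)
    (hπ : ∀ s, π s ∈ stdSimplex ℝ A) (r : S → A → ℝ) (d0 : S → ℝ) :
    HasSum (fun t => γ ^ t * expRew P π r d0 t) (d0 ⬝ᵥ Vval γ P π r) := by
  simpa only [expRew_eq_dotProduct_mulVec, dotProduct, mul_sum, mul_left_comm] using
    hasSum_sum fun s _ => (hasSum_Vval hγ0 hγ1 hP hπ r s).mul_left (d0 s)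

lemma Qval_eq_add_dotProduct_Vval (hγ0 : 0 ≤ γ) (hγ1 : γ < 1) (hP : ∀ s a, P s a ∈ stdSimplex ℝ S)
    (hπ : ∀ s, π s ∈ stdSimplex ℝ A) (r : S → A → ℝ) (s : S) (a : A) :
    Qval γ P π r s a = r s a + γ * (P s a ⬝ᵥ Vval γ P π r) := by
  rw [Qval, (hasSum_expRew hγ0 hγ1 hP hπ r (P s a)).tsum_eq]

lemma Vval_eq_add_mulVec_Vval (hγ0 : 0 ≤ γ) (hγ1 : γ < 1) (hP : ∀ s a, P s a ∈ stdSimplex ℝ S)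
    (hπ : ∀ s, π s ∈ stdSimplex ℝ A) (r : S → A → ℝ) (s : S) :
    Vval γ P π r s = policyReward π r s + γ * (transitionMatrix P π *ᵥ Vval γ P π r) s := by
  set M := transitionMatrix P π
  have htail := (hasSum_nat_add_iff' 1).2 (hasSum_Vval hγ0 hγ1 hP hπ r s)
  have hshift : HasSum (fun t => γ ^ (t + 1) * (M ^ (t + 1) *ᵥ policyReward π r) s)
      (γ * (M *ᵥ Vval γ P π r) s) := by
    have hterm : ∀ t, γ ^ (t + 1) * (M ^ (t + 1) *ᵥ policyReward π r) s =
        γ * ∑ s', M s s' * (γ ^ t * (M ^ t *ᵥ policyReward π r) s') := fun t => by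
      rw [pow_succ', pow_succ', ← mulVec_mulVec, mulVec, dotProduct, mul_sum, mul_sum]
      exact sum_congr rfl fun s' _ => by ring
    simp only [hterm]
    exact (hasSum_sum fun s' _ => (hasSum_Vval hγ0 hγ1 hP hπ r s').mul_left (M s s')).mul_left γ
  simp only [range_one, sum_singleton, pow_zero, one_mul, one_mulVec] at htail
  linarith [htail.unique hshift]

lemma dotProduct_Aval_eq (hγ0 : 0 ≤ γ) (hγ1 : γ < 1) (hP : ∀ s a, P s a ∈ stdSimplex ℝ S)
    (hμ : ∀ s, μ s ∈ stdSimplex ℝ A) (r : S → A → ℝ) (s : S) (hν : ∑ a, ν s a = 1) :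
    ν s ⬝ᵥ Aval γ P μ r s =
      policyReward ν r s + γ * (transitionMatrix P ν *ᵥ Vval γ P μ r) s - Vval γ P μ r s := by
  simp only [dotProduct, Aval, Qval_eq_add_dotProduct_Vval hγ0 hγ1 hP hμ r, transitionMatrix_mulVec_apply,
    policyReward, mul_sub, mul_add, sum_sub_distrib, sum_add_distrib, ← sum_mul, hν, one_mul,
    mul_sum, mul_left_comm (ν s _) γ]

lemma dotProduct_Aval_self (hγ0 : 0 ≤ γ) (hγ1 : γ < 1) (hP : ∀ s a, P s a ∈ stdSimplex ℝ S)
    (hπ : ∀ s, π s ∈ stdSimplex ℝ A) (r : S → A → ℝ) (s : S) :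
    π s ⬝ᵥ Aval γ P π r s = 0 := by
  rw [dotProduct_Aval_eq hγ0 hγ1 hP hπ r s (hπ s).2, ← Vval_eq_add_mulVec_Vval hγ0 hγ1 hP hπ, sub_self]

lemma abs_dotProduct_sum_Aval_le {ι : Type*} [Fintype ι] (hγ0 : 0 ≤ γ) (hγ1 : γ < 1)
    (hP : ∀ s a, P s a ∈ stdSimplex ℝ S) (hμ : ∀ s, μ s ∈ stdSimplex ℝ A) (r : ι → S → A → ℝ)
    {ε β : ℝ} (s : S) (hε : ∀ a, ∑ i, |Aval γ P μ (r i) s a| ≤ ε)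
    (hβ : ∑ a, |ν s a - μ s a| ≤ β) :
    |ν s ⬝ᵥ fun a => ∑ i, Aval γ P μ (r i) s a| ≤ β * ε := by
  have hε0 : 0 ≤ ε := by
    obtain ⟨a, -, -⟩ := exists_ne_zero_of_sum_ne_zero ((hμ s).2.symm ▸ one_ne_zero)
    exact (sum_nonneg fun i _ => abs_nonneg _).trans (hε a)
  have hzero : (μ s ⬝ᵥ fun a => ∑ i, Aval γ P μ (r i) s a) = 0 := by
    simp only [dotProduct, mul_sum]
    rw [sum_comm]
    exact sum_eq_zero fun i _ => dotProduct_Aval_self hγ0 hγ1 hP hμ (r i) s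
  refine (abs_dotProduct_le_of_dotProduct_eq_zero hzero fun a => ?_).trans
    (mul_le_mul_of_nonneg_right hβ hε0)
  exact (abs_sum_le_sum_abs _ _).trans (hε a)

end Values

section PerformanceDifference

variable {S A : Type*} [Fintype S] [Fintype A] [DecidableEq S]
variable {γ : ℝ} {P : S → A → S → ℝ} {μ ν : S → A → ℝ} {d0 : S → ℝ}

lemma stateDist_dotProduct_Aval (hγ0 : 0 ≤ γ) (hγ1 : γ < 1) (hP : ∀ s a, P s a ∈ stdSimplex ℝ S)
    (hμ : ∀ s, μ s ∈ stdSimplex ℝ A) (hν : ∀ s, ν s ∈ stdSimplex ℝ A) (r : S → A → ℝ)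
    (d0 : S → ℝ) (t : ℕ) :
    (stateDist P ν d0 t ⬝ᵥ fun s => ν s ⬝ᵥ Aval γ P μ r s) =
      expRew P ν r d0 t + γ * (stateDist P ν d0 (t + 1) ⬝ᵥ Vval γ P μ r) -
        stateDist P ν d0 t ⬝ᵥ Vval γ P μ r := by
  have hA : (fun s => ν s ⬝ᵥ Aval γ P μ r s) =
      policyReward ν r + γ • (transitionMatrix P ν *ᵥ Vval γ P μ r) - Vval γ P μ r :=
    funext fun s => dotProduct_Aval_eq hγ0 hγ1 hP hμ r s (hν s).2
  rw [hA, dotProduct_sub, dotProduct_add, dotProduct_smul, dotProduct_mulVec, ← stateDist_succ,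
    smul_eq_mul, expRew_eq_dotProduct]

theorem hasSum_performance_difference (hγ0 : 0 ≤ γ) (hγ1 : γ < 1)
    (hP : ∀ s a, P s a ∈ stdSimplex ℝ S) (hμ : ∀ s, μ s ∈ stdSimplex ℝ A)
    (hν : ∀ s, ν s ∈ stdSimplex ℝ A) (r : S → A → ℝ) (hd0 : d0 ∈ stdSimplex ℝ S) :
    HasSum (fun t => γ ^ t * (stateDist P ν d0 t ⬝ᵥ fun s => ν s ⬝ᵥ Aval γ P μ r s))
      (d0 ⬝ᵥ Vval γ P ν r - d0 ⬝ᵥ Vval γ P μ r) := by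
  set x : ℕ → ℝ := fun t => stateDist P ν d0 t ⬝ᵥ Vval γ P μ r
  have hx : HasSum (fun t => γ ^ t * x t) (∑' t, γ ^ t * x t) :=
    (summable_pow_mul_of_abs_le hγ0 hγ1 fun t =>
      abs_dotProduct_le_of_mem_stdSimplex (stateDist_mem_stdSimplex hP hν hd0 t)
        fun s => norm_le_pi_norm (Vval γ P μ r) s).hasSum
  have htail := (hasSum_nat_add_iff' 1).2 hx
  simp only [range_one, sum_singleton, pow_zero, one_mul] at htail
  have h := ((hasSum_expRew hγ0 hγ1 hP hν r d0).add htail).sub hx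
  -- the terms `γ ^ (t + 1) * x (t + 1) - γ ^ t * x t` telescope to `-x 0 = -d0 ⬝ᵥ Vval γ P μ r`
  have hterm : (fun t => γ ^ t * (stateDist P ν d0 t ⬝ᵥ fun s => ν s ⬝ᵥ Aval γ P μ r s)) =
      fun t => γ ^ t * expRew P ν r d0 t + γ ^ (t + 1) * x (t + 1) - γ ^ t * x t := by
    ext t
    rw [stateDist_dotProduct_Aval hγ0 hγ1 hP hμ hν r d0 t, pow_succ]
    ring
  have hvalue : d0 ⬝ᵥ Vval γ P ν r - d0 ⬝ᵥ Vval γ P μ r =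
      d0 ⬝ᵥ Vval γ P ν r + (∑' t, γ ^ t * x t - x 0) - ∑' t, γ ^ t * x t := by
    simp only [x, stateDist]
    ring
  rwa [hterm, hvalue]

theorem hasSum_eta_sub {ι : Type*} [Fintype ι] (hγ0 : 0 ≤ γ) (hγ1 : γ < 1)
    (hP : ∀ s a, P s a ∈ stdSimplex ℝ S) (hμ : ∀ s, μ s ∈ stdSimplex ℝ A)
    (hν : ∀ s, ν s ∈ stdSimplex ℝ A) (r : ι → S → A → ℝ) (hd0 : d0 ∈ stdSimplex ℝ S) :
    HasSum (fun t => γ ^ t *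
        (stateDist P ν d0 t ⬝ᵥ fun s => ν s ⬝ᵥ fun a => ∑ i, Aval γ P μ (r i) s a))
      (eta γ P ν r d0 - eta γ P μ r d0) := by
  rw [eta, eta, ← sum_sub_distrib]
  refine (hasSum_sum fun i _ => hasSum_performance_difference hγ0 hγ1 hP hμ hν (r i) hd0).congr_fun
    fun t => ?_
  rw [← mul_sum, ← dotProduct_sum]
  congr 2 with s
  rw [Finset.sum_apply, ← dotProduct_sum]
  exact congrArg (ν s ⬝ᵥ ·) (funext fun a => (Finset.sum_apply a univ _).symm)

end PerformanceDifference

/-- TRPO surrogate bound for sums of individual advantages: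
if `∑ᵢ |Aᵢ^{π_old}(s,a)| ≤ ε` for all `(s,a)`, then with
`L_{π_old}(π_new) = η(π_old) + E_{s∼d^{π_old}, a∼π_new(·|s)}[∑ᵢ Aᵢ^{π_old}(s,a)]` and
`α = maxₛ D_TV(π_old(·|s), π_new(·|s))`, we have
`|η(π_new) − L_{π_old}(π_new)| ≤ 4εγα²/(1−γ)²`. -/
theorem trpo_surrogate_bound
    {S A ι : Type*} [Fintype S] [Fintype A] [Fintype ι] [DecidableEq S] [Nonempty S]
    (γ : ℝ) (hγ0 : 0 ≤ γ) (hγ1 : γ < 1)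
    (P : S → A → S → ℝ) (hP0 : ∀ s a s', 0 ≤ P s a s') (hP1 : ∀ s a, ∑ s', P s a s' = 1)
    (πold πnew : S → A → ℝ)
    (hπo0 : ∀ s a, 0 ≤ πold s a) (hπo1 : ∀ s, ∑ a, πold s a = 1)
    (hπn0 : ∀ s a, 0 ≤ πnew s a) (hπn1 : ∀ s, ∑ a, πnew s a = 1)
    (r : ι → S → A → ℝ)
    (d0 : S → ℝ) (hd0 : ∀ s, 0 ≤ d0 s) (hd1 : ∑ s, d0 s = 1)
    (ε : ℝ) (hε : ∀ s a, ∑ i, |Aval γ P πold (r i) s a| ≤ ε)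
    (α : ℝ)
    (hα : α = Finset.univ.sup' Finset.univ_nonempty
      (fun s : S => (1 / 2) * ∑ a, |πold s a - πnew s a|)) :
    |eta γ P πnew r d0 -
        (eta γ P πold r d0 +
          ∑ s, dvisit γ P πold d0 s *
            ∑ a, πnew s a * ∑ i, Aval γ P πold (r i) s a)| ≤
      4 * ε * γ * α ^ 2 / (1 - γ) ^ 2 := by
  have hP : ∀ s a, P s a ∈ stdSimplex ℝ S := fun s a => ⟨hP0 s a, hP1 s a⟩
  have hold : ∀ s, πold s ∈ stdSimplex ℝ A := fun s => ⟨hπo0 s, hπo1 s⟩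
  have hnew : ∀ s, πnew s ∈ stdSimplex ℝ A := fun s => ⟨hπn0 s, hπn1 s⟩
  have hd : d0 ∈ stdSimplex ℝ S := ⟨hd0, hd1⟩
  set g : S → ℝ := fun s => πnew s ⬝ᵥ fun a => ∑ i, Aval γ P πold (r i) s a
  have hTV : ∀ s, ∑ a, |πnew s a - πold s a| ≤ 2 * α := fun s => by
    simp_rw [abs_sub_comm (πnew s _)]
    linarith [hα ▸ le_sup' (fun s => (1 / 2) * ∑ a, |πold s a - πnew s a|) (mem_univ s)]
  have hg : ∀ s, |g s| ≤ 2 * α * ε := fun s =>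
    abs_dotProduct_sum_Aval_le hγ0 hγ1 hP hold r s (hε s) (hTV s)
  have hΔ : ∀ t : ℕ, |stateDist P πnew d0 t ⬝ᵥ g - stateDist P πold d0 t ⬝ᵥ g| ≤
      4 * ε * α ^ 2 * t := fun t =>
    (abs_stateDist_dotProduct_sub_le hP hold hnew hd hTV hg
      ((abs_nonneg _).trans (hg (Classical.arbitrary S))) t).trans_eq (by ring)
  have hL : HasSum (fun t => γ ^ t * (stateDist P πnew d0 t ⬝ᵥ g - stateDist P πold d0 t ⬝ᵥ g))
      (eta γ P πnew r d0 - eta γ P πold r d0 - dvisit γ P πold d0 ⬝ᵥ g) :=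
    ((hasSum_eta_sub hγ0 hγ1 hP hold hnew r hd).sub
      (hasSum_dvisit_dotProduct hγ0 hγ1 hP hold hd g)).congr_fun fun t => mul_sub _ _ _
  rw [sub_add_eq_sub_sub, show 4 * ε * γ * α ^ 2 = 4 * ε * α ^ 2 * γ by ring]
  exact abs_le_of_hasSum_pow_mul_of_abs_le_mul hγ0 hγ1 hL hΔ
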